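/- arXiv:2112.00305 — 4 statements merged into one kernel-verified Lean document; each statement's English description precedes it below -/
import Mathlib

section
/- Let h ∈ H and g ∈ G be such that the real-valued function ω ↦ ⟪h, Φ ω⟫ is a version of the conditional expectation of ω ↦ ⟪g, Ψ ω⟫ given m (i.e. ⟪h, Φ ·⟫ =ᵐ[μ] μ[⟪g, Ψ ·⟫ | m]). Then C_ZZ h = C_ZX g, i.e. ∫ ⟪h, Φ ω⟫ • Φ ω ∂μ = ∫ ⟪g, Ψ ω⟫ • Φ ω ∂μ. -/
open MeasureTheory RealInnerProductSpace

theorem covariance_eq_cross_covariance_of_condexp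
    {Ω : Type*} (m : MeasurableSpace Ω) [F : MeasurableSpace Ω]
    (hm : m ≤ F)
    (μ : Measure Ω) [IsProbabilityMeasure μ]
    {H G : Type*} [NormedAddCommGroup H] [InnerProductSpace ℝ H] [CompleteSpace H]
    [NormedAddCommGroup G] [InnerProductSpace ℝ G] [CompleteSpace G]
    (Φ : Ω → H) (Ψ : Ω → G) (B : ℝ)
    (hΦmeas : StronglyMeasurable Φ) (hΨmeas : StronglyMeasurable Ψ)
    (hΦB : ∀ ω, ‖Φ ω‖ ≤ B) (hΨB : ∀ ω, ‖Ψ ω‖ ≤ B)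
    (hΦm : StronglyMeasurable[m] Φ)
    (h : H) (g : G)
    (hcond : (fun ω => ⟪h, Φ ω⟫) =ᵐ[μ] μ[(fun ω => ⟪g, Ψ ω⟫) | m]) :
    ∫ ω, ⟪h, Φ ω⟫ • Φ ω ∂μ = ∫ ω, ⟪g, Ψ ω⟫ • Φ ω ∂μ := by
  -- strong measurability of scalar functions
  have hXmeas : StronglyMeasurable (fun ω => ⟪g, Ψ ω⟫) :=
    stronglyMeasurable_const.inner hΨmeas
  have hX : Integrable (fun ω => ⟪g, Ψ ω⟫) μ := by
    refine (integrable_const (‖g‖ * B)).mono' hXmeas.aestronglyMeasurable ?_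
    filter_upwards with ω
    calc ‖⟪g, Ψ ω⟫‖ ≤ ‖g‖ * ‖Ψ ω‖ := norm_inner_le_norm _ _
      _ ≤ ‖g‖ * B := by gcongr; exact hΨB ω
  -- integrability of the vector-valued integrands
  have hint1 : Integrable (fun ω => ⟪h, Φ ω⟫ • Φ ω) μ := by
    refine (integrable_const (‖h‖ * B * B)).mono'
      ((stronglyMeasurable_const.inner hΦmeas).smul hΦmeas).aestronglyMeasurable ?_
    filter_upwards with ω
    rw [norm_smul]
    calc ‖⟪h, Φ ω⟫‖ * ‖Φ ω‖ ≤ (‖h‖ * ‖Φ ω‖) * ‖Φ ω‖ := by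
          gcongr; exact norm_inner_le_norm _ _
      _ ≤ ‖h‖ * B * B := by
          have hB : 0 ≤ B := (norm_nonneg _).trans (hΦB ω)
          gcongr <;> first | exact hΦB ω | positivity
  have hint2 : Integrable (fun ω => ⟪g, Ψ ω⟫ • Φ ω) μ := by
    refine (integrable_const (‖g‖ * B * B)).mono'
      (hXmeas.smul hΦmeas).aestronglyMeasurable ?_
    filter_upwards with ω
    rw [norm_smul]
    calc ‖⟪g, Ψ ω⟫‖ * ‖Φ ω‖ ≤ (‖g‖ * ‖Ψ ω‖) * ‖Φ ω‖ := by
          gcongr; exact norm_inner_le_norm _ _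
      _ ≤ ‖g‖ * B * B := by
          have hB : 0 ≤ B := (norm_nonneg _).trans (hΦB ω)
          gcongr <;> first | exact hΦB ω | exact hΨB ω | positivity
  -- reduce to scalar equality via inner products with arbitrary v
  refine ext_inner_left ℝ fun v => ?_
  rw [← integral_inner hint1 v, ← integral_inner hint2 v]
  simp_rw [real_inner_smul_right]
  -- Y ω = ⟪v, Φ ω⟫ is bounded and m-measurable
  have hYm : StronglyMeasurable[m] (fun ω => ⟪v, Φ ω⟫) :=
    stronglyMeasurable_const.inner hΦm
  have hYmeas : StronglyMeasurable (fun ω => ⟪v, Φ ω⟫) := stronglyMeasurable_const.inner hΦmeas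
  have hYX : Integrable ((fun ω => ⟪v, Φ ω⟫) * fun ω => ⟪g, Ψ ω⟫) μ := by
    refine (integrable_const (‖v‖ * B * (‖g‖ * B))).mono'
      (hYmeas.mul hXmeas).aestronglyMeasurable ?_
    filter_upwards with ω
    simp only [Pi.mul_apply, norm_mul]
    have hB : 0 ≤ B := (norm_nonneg _).trans (hΦB ω)
    have h1 : ‖⟪v, Φ ω⟫‖ ≤ ‖v‖ * B :=
      (norm_inner_le_norm _ _).trans (by gcongr; exact hΦB ω)
    have h2 : ‖⟪g, Ψ ω⟫‖ ≤ ‖g‖ * B :=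
      (norm_inner_le_norm _ _).trans (by gcongr; exact hΨB ω)
    exact mul_le_mul h1 h2 (norm_nonneg _) ((norm_nonneg _).trans h1)
  -- pull-out property
  have hpull := condExp_mul_of_stronglyMeasurable_left hYm hYX hX
  calc ∫ ω, ⟪h, Φ ω⟫ * ⟪v, Φ ω⟫ ∂μ
      = ∫ ω, ((fun ω => ⟪v, Φ ω⟫) * μ[(fun ω => ⟪g, Ψ ω⟫)|m]) ω ∂μ := by
        refine integral_congr_ae ?_
        filter_upwards [hcond] with ω hω
        simp only [Pi.mul_apply]
        rw [hω, mul_comm]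
    _ = ∫ ω, (μ[(fun ω => ⟪v, Φ ω⟫) * (fun ω => ⟪g, Ψ ω⟫)|m]) ω ∂μ :=
        (integral_congr_ae hpull).symm
    _ = ∫ ω, ((fun ω => ⟪v, Φ ω⟫) * (fun ω => ⟪g, Ψ ω⟫)) ω ∂μ :=
        integral_condExp hm (f := (fun ω => ⟪v, Φ ω⟫) * (fun ω => ⟪g, Ψ ω⟫))
    _ = ∫ ω, ⟪g, Ψ ω⟫ * ⟪v, Φ ω⟫ ∂μ := by
        refine integral_congr_ae (Filter.Eventually.of_forall fun ω => ?_)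
        simp [mul_comm]
end

section
/- Assume that for every g ∈ G there exists h_g ∈ H such that ⟪h_g, φ z⟫ = ⟪g, ψ (f z)⟫ for ν-almost every z. If f₀ ∈ H satisfies C_ZZ f₀ = μ_ν, then ∫ ⟪f₀, φ z⟫ • ψ (f z) ∂ν(z) = ∫ ψ x ∂(f_*ν)(x); that is, the kernel-embedded Perron–Frobenius operator applied to the embedding of ν yields the kernel mean embedding of the pushforward measure f_*ν (the commutation E_l ∘ P = P_E ∘ E_k of the Perron–Frobenius operator with mean embedding). -/
open MeasureTheory RealInnerProductSpace

theorem kernel_PF_commutes_with_mean_embedding_pushforward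
    {Z X : Type*} [MeasurableSpace Z] [MeasurableSpace X]
    (f : Z → X) (hf : Measurable f)
    (ν : Measure Z) [IsProbabilityMeasure ν]
    {H G : Type*} [NormedAddCommGroup H] [InnerProductSpace ℝ H] [CompleteSpace H]
    [NormedAddCommGroup G] [InnerProductSpace ℝ G] [CompleteSpace G]
    (φ : Z → H) (ψ : X → G) (B : ℝ)
    (hφmeas : StronglyMeasurable φ) (hψmeas : StronglyMeasurable ψ)
    (hφB : ∀ z, ‖φ z‖ ≤ B) (hψB : ∀ x, ‖ψ x‖ ≤ B)
    (hcond : ∀ g : G, ∃ h : H, (fun z => ⟪h, φ z⟫) =ᵐ[ν] fun z => ⟪g, ψ (f z)⟫)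
    (f₀ : H) (hf₀ : ∫ z, ⟪f₀, φ z⟫ • φ z ∂ν = ∫ z, φ z ∂ν) :
    ∫ z, ⟪f₀, φ z⟫ • ψ (f z) ∂ν = ∫ x, ψ x ∂(ν.map f) := by
  have hφint : Integrable φ ν :=
    ⟨hφmeas.aestronglyMeasurable,
      HasFiniteIntegral.of_bounded (C := B) (Filter.Eventually.of_forall hφB)⟩
  have hinner : StronglyMeasurable fun z => ⟪f₀, φ z⟫ :=
    (stronglyMeasurable_const).inner hφmeas
  have hsm1 : Integrable (fun z => ⟪f₀, φ z⟫ • φ z) ν := by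
    refine ⟨(hinner.smul hφmeas).aestronglyMeasurable,
      HasFiniteIntegral.of_bounded (C := ‖f₀‖ * B * B)
        (Filter.Eventually.of_forall fun z => ?_)⟩
    rw [norm_smul]
    have h1 : ‖⟪f₀, φ z⟫‖ ≤ ‖f₀‖ * B :=
      (norm_inner_le_norm _ _).trans
        (mul_le_mul_of_nonneg_left (hφB z) (norm_nonneg _))
    exact (mul_le_mul h1 (hφB z) (norm_nonneg _)
      (mul_nonneg (norm_nonneg _) ((norm_nonneg (φ z)).trans (hφB z)))).trans_eq rfl
  have hsm2 : Integrable (fun z => ⟪f₀, φ z⟫ • ψ (f z)) ν := by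
    refine ⟨(hinner.smul (hψmeas.comp_measurable hf)).aestronglyMeasurable,
      HasFiniteIntegral.of_bounded (C := ‖f₀‖ * B * B)
        (Filter.Eventually.of_forall fun z => ?_)⟩
    rw [norm_smul]
    have h1 : ‖⟪f₀, φ z⟫‖ ≤ ‖f₀‖ * B :=
      (norm_inner_le_norm _ _).trans
        (mul_le_mul_of_nonneg_left (hφB z) (norm_nonneg _))
    exact mul_le_mul h1 (hψB (f z)) (norm_nonneg _)
      (mul_nonneg (norm_nonneg _) ((norm_nonneg (φ z)).trans (hφB z)))
  refine ext_inner_left ℝ fun g => ?_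
  obtain ⟨h, hh⟩ := hcond g
  rw [integral_map hf.aemeasurable hψmeas.aestronglyMeasurable]
  calc ⟪g, ∫ z, ⟪f₀, φ z⟫ • ψ (f z) ∂ν⟫
      = ∫ z, ⟪f₀, φ z⟫ * ⟪g, ψ (f z)⟫ ∂ν := by
        rw [← integral_inner hsm2]
        exact integral_congr_ae (Filter.Eventually.of_forall fun z => by
          simp [real_inner_smul_right])
    _ = ∫ z, ⟪f₀, φ z⟫ * ⟪h, φ z⟫ ∂ν := by
        refine integral_congr_ae (hh.mono fun z hz => ?_)
        dsimp only at hz ⊢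
        rw [hz]
    _ = ⟪h, ∫ z, ⟪f₀, φ z⟫ • φ z ∂ν⟫ := by
        rw [← integral_inner hsm1]
        exact integral_congr_ae (Filter.Eventually.of_forall fun z => by
          simp [real_inner_smul_right])
    _ = ⟪h, ∫ z, φ z ∂ν⟫ := by rw [hf₀]
    _ = ∫ z, ⟪h, φ z⟫ ∂ν := (integral_inner hφint h).symm
    _ = ∫ z, ⟪g, ψ (f z)⟫ ∂ν := integral_congr_ae hh
    _ = ⟪g, ∫ z, ψ (f z) ∂ν⟫ :=
        integral_inner ⟨(hψmeas.comp_measurable hf).aestronglyMeasurable,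
          HasFiniteIntegral.of_bounded (C := B) (Filter.Eventually.of_forall fun z => hψB (f z))⟩ g
end

section
/- Let U : H → G be a bounded linear operator such that for every g ∈ G the function ω ↦ ⟪g, U (Φ ω)⟫ is a version of the conditional expectation μ[⟪g, Ψ ·⟫ | m]. Then ∫ U (Φ ω) ∂μ(ω) = ∫ Ψ ω ∂μ(ω) = μ_X; that is, the expectation of the transferred samples U(Φ(ω)) equals the kernel mean embedding μ_X of the data distribution. -/
open MeasureTheory RealInnerProductSpace

theorem transferred_samples_mean_eq_mean_embedding
    {Ω : Type*} (m : MeasurableSpace Ω) [F : MeasurableSpace Ω]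
    (hm : m ≤ F)
    (μ : Measure Ω) [IsProbabilityMeasure μ]
    {H G : Type*} [NormedAddCommGroup H] [InnerProductSpace ℝ H] [CompleteSpace H]
    [NormedAddCommGroup G] [InnerProductSpace ℝ G] [CompleteSpace G]
    (Φ : Ω → H) (Ψ : Ω → G) (B : ℝ)
    (hΦmeas : StronglyMeasurable Φ) (hΨmeas : StronglyMeasurable Ψ)
    (hΦB : ∀ ω, ‖Φ ω‖ ≤ B) (hΨB : ∀ ω, ‖Ψ ω‖ ≤ B)
    (U : H →L[ℝ] G)
    (hU : ∀ g : G, (fun ω => ⟪g, U (Φ ω)⟫) =ᵐ[μ] μ[(fun ω => ⟪g, Ψ ω⟫) | m]) :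
    ∫ ω, U (Φ ω) ∂μ = ∫ ω, Ψ ω ∂μ := by
  have hΦint : Integrable Φ μ :=
    ⟨hΦmeas.aestronglyMeasurable, HasFiniteIntegral.of_bounded (C := B)
      (Filter.Eventually.of_forall hΦB)⟩
  have hΨint : Integrable Ψ μ :=
    ⟨hΨmeas.aestronglyMeasurable, HasFiniteIntegral.of_bounded (C := B)
      (Filter.Eventually.of_forall hΨB)⟩
  have hUΦint : Integrable (fun ω => U (Φ ω)) μ := U.integrable_comp hΦint
  apply ext_inner_left ℝ
  intro g
  rw [← integral_inner hUΦint g, ← integral_inner hΨint g]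
  calc ∫ ω, ⟪g, U (Φ ω)⟫ ∂μ
      = ∫ ω, (μ[(fun ω => ⟪g, Ψ ω⟫)|m]) ω ∂μ := integral_congr_ae (hU g)
    _ = ∫ ω, ⟪g, Ψ ω⟫ ∂μ := integral_condExp hm
end

section
/- If the Gram matrix K is invertible, then for every permutation σ of {1, …, n}, the operator P_σ : H → G defined from the re-paired samples (ψ (σ i), φ i) by P_σ h = Σ_{i,j} (K⁻¹)_{ij} ⟪φ j, h⟫ • ψ (σ i) still satisfies P_σ ((1/n) Σ_{i=1}^n φ i) = (1/n) Σ_{i=1}^n ψ i; i.e., the identity transferring the empirical prior embedding to the empirical data embedding holds for any pairing of the independently sampled data and prior points. -/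
open RealInnerProductSpace Finset

theorem empirical_kPF_mean_embedding_any_pairing
    {H G : Type*} [NormedAddCommGroup H] [InnerProductSpace ℝ H]
    [NormedAddCommGroup G] [InnerProductSpace ℝ G]
    (n : ℕ) (hn : 1 ≤ n)
    (φ : Fin n → H) (ψ : Fin n → G)
    (K : Matrix (Fin n) (Fin n) ℝ) (hK : ∀ i j, K i j = ⟪φ i, φ j⟫)
    (hKinv : IsUnit K) :
    ∀ σ : Equiv.Perm (Fin n),
      ∑ i : Fin n, ∑ j : Fin n,
          (K⁻¹ i j * ⟪φ j, (n : ℝ)⁻¹ • ∑ k : Fin n, φ k⟫) • ψ (σ i)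
        = (n : ℝ)⁻¹ • ∑ i : Fin n, ψ i := by
  intro σ
  have hdet := (Matrix.isUnit_iff_isUnit_det K).mp hKinv
  have hinv : K⁻¹ * K = 1 := Matrix.nonsing_inv_mul K hdet
  have key : ∀ i, ∑ j, K⁻¹ i j * ⟪φ j, (n : ℝ)⁻¹ • ∑ k : Fin n, φ k⟫ = (n : ℝ)⁻¹ := by
    intro i
    have h1 : ∀ j, ⟪φ j, (n : ℝ)⁻¹ • ∑ k : Fin n, φ k⟫ = (n : ℝ)⁻¹ * ∑ k, K j k := by
      intro j
      simp [real_inner_smul_right, inner_sum, hK]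
    calc ∑ j, K⁻¹ i j * ⟪φ j, (n : ℝ)⁻¹ • ∑ k : Fin n, φ k⟫
        = (n : ℝ)⁻¹ * ∑ k, ∑ j, K⁻¹ i j * K j k := by
          simp_rw [h1, Finset.mul_sum]
          rw [Finset.sum_comm]
          exact Finset.sum_congr rfl fun k _ => Finset.sum_congr rfl fun j _ => by ring
      _ = (n : ℝ)⁻¹ * ∑ k, (1 : Matrix (Fin n) (Fin n) ℝ) i k := by
          rw [← hinv]; rfl
      _ = (n : ℝ)⁻¹ := by
          simp [Matrix.one_apply]
  simp_rw [← Finset.sum_smul, key, ← Finset.smul_sum]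
  rw [Equiv.sum_comp σ ψ]
end
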